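/- arXiv:0805.4222 — 5 statements merged into one kernel-verified Lean document; each statement's English description precedes it below -/
import Mathlib

section
/- Let n ≥ 2, let G be a group, and let g_1, …, g_{n−1} ∈ G satisfy the braid relations: g_i g_{i+1} g_i = g_{i+1} g_i g_{i+1} for 1 ≤ i ≤ n−2, and g_i g_j = g_j g_i whenever |i−j| ≥ 2. Then for all indices 1 ≤ i, j, k, l ≤ n−1 with |i−j| ≥ 2 and |k−l| ≥ 2, there exists an element z of the subgroup of G generated by g_1, …, g_{n−1} such that z g_i z^{−1} = g_k and z g_j z^{−1} = g_l. -/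
/-!
Conjugating by `g_i g_{i+1}` sends `g_i` to `g_{i+1}` and fixes every generator distant from
both, so one entry of a distant pair can be slid one step while the other stays put. Sliding
first the smaller index down to `1` and then the larger one down to `3` brings every pair
`(g_i, g_j)` with `i < j` to `(g_1, g_3)`. For `i > j` one lands on `(g_3, g_1)`, which is
carried to `(g_1, g_3)` by `g_2 g_1 g_3 g_2`: read as `(g_2 g_3)(g_1 g_2)` it sends `g_1` to `g_3`,
read as `(g_2 g_1)(g_3 g_2)` it sends `g_3` to `g_1`.
-/

section Conjugation

variable {G : Type*} [Group G]

theorem conj_mul_eq_conj_conj (x y a : G) : x * y * a * (x * y)⁻¹ = x * (y * a * y⁻¹) * x⁻¹ := by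
  group

theorem conj_of_braid {a b : G} (h : a * b * a = b * a * b) : a * b * a * (a * b)⁻¹ = b := by
  rw [h]
  group

end Conjugation

namespace Subgroup

variable {G : Type*} [Group G] {H : Subgroup G}

variable (H) in
def PairConj (p q : G × G) : Prop :=
  ∃ z ∈ H, z * p.1 * z⁻¹ = q.1 ∧ z * p.2 * z⁻¹ = q.2

namespace PairConj

theorem refl (p : G × G) : H.PairConj p p :=
  ⟨1, H.one_mem, by simp, by simp⟩

theorem symm {p q : G × G} (h : H.PairConj p q) : H.PairConj q p := by
  obtain ⟨z, hz, h1, h2⟩ := h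
  refine ⟨z⁻¹, H.inv_mem hz, ?_, ?_⟩
  · rw [← h1]; group
  · rw [← h2]; group

theorem trans {p q r : G × G} (hpq : H.PairConj p q) (hqr : H.PairConj q r) :
    H.PairConj p r := by
  obtain ⟨z, hz, h1, h2⟩ := hpq
  obtain ⟨w, hw, h1', h2'⟩ := hqr
  exact ⟨w * z, H.mul_mem hw hz, by rw [conj_mul_eq_conj_conj, h1, h1'], by rw [conj_mul_eq_conj_conj, h2, h2']⟩

theorem swap {a b c d : G} (h : H.PairConj (a, b) (c, d)) : H.PairConj (b, a) (d, c) := by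
  obtain ⟨z, hz, h1, h2⟩ := h
  exact ⟨z, hz, h2, h1⟩

theorem of_braid {a b x : G} (hab : a * b * a = b * a * b) (ha : Commute a x)
    (hb : Commute b x) (hmem : a * b ∈ H) : H.PairConj (a, x) (b, x) :=
  ⟨a * b, hmem, conj_of_braid hab, (ha.mul_left hb).mul_inv_cancel⟩

theorem swap_of_braid {a b c : G} (hab : a * b * a = b * a * b) (hbc : b * c * b = c * b * c)
    (hac : Commute a c) (hmem : b * a * c * b ∈ H) : H.PairConj (a, c) (c, a) := by
  have hbcab : b * a * c * b = b * c * (a * b) := by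
    rw [mul_assoc b a c, hac.eq]
    group
  have hbacb : b * a * c * b = b * a * (c * b) := by group
  refine ⟨b * a * c * b, hmem, ?_, ?_⟩
  · rw [hbcab, conj_mul_eq_conj_conj, conj_of_braid hab, conj_of_braid hbc]
  · rw [hbacb, conj_mul_eq_conj_conj, conj_of_braid hbc.symm, conj_of_braid hab.symm]

end PairConj

end Subgroup

section Braid

open Subgroup

variable {G : Type*} [Group G] {n : ℕ} {g : ℕ → G}

structure BraidRelations (n : ℕ) (g : ℕ → G) : Prop where
  braid : ∀ i, 1 ≤ i → i ≤ n - 2 → g i * g (i + 1) * g i = g (i + 1) * g i * g (i + 1)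
  comm : ∀ i j, 1 ≤ i → i ≤ n - 1 → 1 ≤ j → j ≤ n - 1 →
    2 ≤ |(i : ℤ) - (j : ℤ)| → g i * g j = g j * g i

variable (n g) in
def braidClosure : Subgroup G :=
  closure {x : G | ∃ m, 1 ≤ m ∧ m ≤ n - 1 ∧ x = g m}

theorem gen_mem_braidClosure {m : ℕ} (h1 : 1 ≤ m) (h2 : m ≤ n - 1) : g m ∈ braidClosure n g :=
  subset_closure ⟨m, h1, h2, rfl⟩

namespace BraidRelations

theorem commute (hg : BraidRelations n g) {i j : ℕ} (hi : 1 ≤ i) (hij : i + 2 ≤ j)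
    (hj : j ≤ n - 1) : Commute (g i) (g j) :=
  hg.comm i j hi (by omega) (by omega) hj (by rw [abs_sub_comm, abs_of_nonneg (by omega)]; omega)

theorem pairConj_succ_left (hg : BraidRelations n g) {i j : ℕ} (hi : 1 ≤ i) (hij : i + 3 ≤ j)
    (hj : j ≤ n - 1) : (braidClosure n g).PairConj (g (i + 1), g j) (g i, g j) :=
  PairConj.of_braid (hg.braid i hi (by omega)).symm (hg.commute (by omega) (by omega) hj)
    (hg.commute hi (by omega) hj)
    (mul_mem (gen_mem_braidClosure (by omega) (by omega)) (gen_mem_braidClosure hi (by omega)))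

theorem pairConj_succ_right (hg : BraidRelations n g) {i j : ℕ} (hi : 1 ≤ i) (hij : i + 2 ≤ j)
    (hj : j + 1 ≤ n - 1) : (braidClosure n g).PairConj (g i, g (j + 1)) (g i, g j) :=
  (PairConj.of_braid (hg.braid j (by omega) (by omega)).symm
    (hg.commute hi (by omega) hj).symm (hg.commute hi hij (by omega)).symm
    (mul_mem (gen_mem_braidClosure (by omega) hj) (gen_mem_braidClosure (by omega) (by omega)))).swap

theorem pairConj_one_left (hg : BraidRelations n g) {i j : ℕ} (hi : 1 ≤ i) (hij : i + 2 ≤ j)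
    (hj : j ≤ n - 1) : (braidClosure n g).PairConj (g i, g j) (g 1, g j) := by
  induction i, hi using Nat.le_induction with
  | base => exact PairConj.refl _
  | succ i hi ih => exact (hg.pairConj_succ_left hi hij hj).trans (ih (by omega))

theorem pairConj_three_right (hg : BraidRelations n g) {j : ℕ} (hj : 3 ≤ j) (hjn : j ≤ n - 1) :
    (braidClosure n g).PairConj (g 1, g j) (g 1, g 3) := by
  induction j, hj using Nat.le_induction with
  | base => exact PairConj.refl _
  | succ j hj ih => exact (hg.pairConj_succ_right le_rfl hj hjn).trans (ih (by omega))

theorem pairConj_three_one (hg : BraidRelations n g) (hn : 4 ≤ n) :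
    (braidClosure n g).PairConj (g 3, g 1) (g 1, g 3) := by
  have h1 := gen_mem_braidClosure (g := g) (le_refl 1) (by omega : 1 ≤ n - 1)
  have h2 := gen_mem_braidClosure (g := g) (by omega : 1 ≤ 2) (by omega : 2 ≤ n - 1)
  have h3 := gen_mem_braidClosure (g := g) (by omega : 1 ≤ 3) (by omega : 3 ≤ n - 1)
  exact (PairConj.swap_of_braid (hg.braid 1 le_rfl (by omega)) (hg.braid 2 (by omega) (by omega))
    (hg.commute le_rfl le_rfl (by omega)) (mul_mem (mul_mem (mul_mem h2 h1) h3) h2)).symm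

theorem pairConj_one_three (hg : BraidRelations n g) {i j : ℕ} (hi1 : 1 ≤ i) (hi2 : i ≤ n - 1)
    (hj1 : 1 ≤ j) (hj2 : j ≤ n - 1) (hij : 2 ≤ |(i : ℤ) - (j : ℤ)|) :
    (braidClosure n g).PairConj (g i, g j) (g 1, g 3) := by
  rcases le_abs.mp hij with hji | hij
  · have hji : j + 2 ≤ i := by omega
    exact ((hg.pairConj_one_left hj1 hji hi2).trans
      (hg.pairConj_three_right (by omega) hi2)).swap.trans (hg.pairConj_three_one (by omega))
  · have hij : i + 2 ≤ j := by omega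
    exact (hg.pairConj_one_left hi1 hij hj2).trans (hg.pairConj_three_right (by omega) hj2)

end BraidRelations

end Braid

theorem braid_distant_pairs_conjugate_general
    (n : ℕ) (G : Type*) [Group G] (g : ℕ → G)
    (hbraid : ∀ i, 1 ≤ i → i ≤ n - 2 →
      g i * g (i + 1) * g i = g (i + 1) * g i * g (i + 1))
    (hcomm : ∀ i j, 1 ≤ i → i ≤ n - 1 → 1 ≤ j → j ≤ n - 1 →
      2 ≤ |(i : ℤ) - (j : ℤ)| → g i * g j = g j * g i)
    (i j k l : ℕ) (hi1 : 1 ≤ i) (hi2 : i ≤ n - 1) (hj1 : 1 ≤ j) (hj2 : j ≤ n - 1)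
    (hk1 : 1 ≤ k) (hk2 : k ≤ n - 1) (hl1 : 1 ≤ l) (hl2 : l ≤ n - 1)
    (hij : 2 ≤ |(i : ℤ) - (j : ℤ)|) (hkl : 2 ≤ |(k : ℤ) - (l : ℤ)|) :
    ∃ z ∈ Subgroup.closure {x : G | ∃ m, 1 ≤ m ∧ m ≤ n - 1 ∧ x = g m},
      z * g i * z⁻¹ = g k ∧ z * g j * z⁻¹ = g l :=
  have hg : BraidRelations n g := ⟨hbraid, hcomm⟩
  (hg.pairConj_one_three hi1 hi2 hj1 hj2 hij).trans
    (hg.pairConj_one_three hk1 hk2 hl1 hl2 hkl).symm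

/-- Lemma 2.6: all ordered pairs of distant braid generators are
simultaneously conjugate by an element of the subgroup generated by the
images of the generators. -/
theorem braid_distant_pairs_conjugate
    (n : ℕ) (hn : 2 ≤ n) (G : Type*) [Group G] (g : ℕ → G)
    (hbraid : ∀ i, 1 ≤ i → i ≤ n - 2 →
      g i * g (i + 1) * g i = g (i + 1) * g i * g (i + 1))
    (hcomm : ∀ i j, 1 ≤ i → i ≤ n - 1 → 1 ≤ j → j ≤ n - 1 →
      2 ≤ |(i : ℤ) - (j : ℤ)| → g i * g j = g j * g i)
    (i j k l : ℕ) (hi1 : 1 ≤ i) (hi2 : i ≤ n - 1) (hj1 : 1 ≤ j) (hj2 : j ≤ n - 1)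
    (hk1 : 1 ≤ k) (hk2 : k ≤ n - 1) (hl1 : 1 ≤ l) (hl2 : l ≤ n - 1)
    (hij : 2 ≤ |(i : ℤ) - (j : ℤ)|) (hkl : 2 ≤ |(k : ℤ) - (l : ℤ)|) :
    ∃ z ∈ Subgroup.closure {x : G | ∃ m, 1 ≤ m ∧ m ≤ n - 1 ∧ x = g m},
      z * g i * z⁻¹ = g k ∧ z * g j * z⁻¹ = g l :=
  braid_distant_pairs_conjugate_general n G g hbraid hcomm i j k l hi1 hi2 hj1 hj2 hk1 hk2 hl1 hl2
    hij hkl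
end

section
/- Let n ≥ 2, let π : G → H be a surjective group homomorphism whose kernel is contained in the center of G (a central extension), and let g_1, …, g_{n−1} ∈ G satisfy the braid relations: g_i g_{i+1} g_i = g_{i+1} g_i g_{i+1} for 1 ≤ i ≤ n−2, and g_i g_j = g_j g_i whenever |i−j| ≥ 2. If π(g_1) = π(g_2) = ⋯ = π(g_{n−1}), then g_1 = g_2 = ⋯ = g_{n−1}. -/
/-!
Write `g (i+1) = g i * z` with `z := (g i)⁻¹ * g (i+1)`. Since `π` identifies `g i` and
`g (i+1)`, `z` lies in the kernel, hence is central; the braid relation then reads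
`(g i)^3 * z = (g i)^3 * z^2`, so `z = 1`. Equality propagates along the chain of generators.
-/

theorem eq_of_braid_of_commute_inv_mul {G : Type*} [Group G] {a b : G}
    (hcomm : Commute a (a⁻¹ * b)) (hbraid : a * b * a = b * a * b) : a = b := by
  obtain ⟨z, rfl⟩ : ∃ z, b = a * z := ⟨a⁻¹ * b, by simp⟩
  rw [inv_mul_cancel_left] at hcomm
  have hcube : a * (a * z) * a = a * a * a * z := by
    rw [show a * (a * z) * a = a * a * (z * a) by group, ← hcomm.eq]; group
  have hcube' : a * z * a * (a * z) = a * a * a * z * z := by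
    rw [show a * z * a * (a * z) = a * (z * a) * (a * z) by group, ← hcomm.eq,
      show a * (a * z) * (a * z) = a * a * (z * a) * z by group, ← hcomm.eq]; group
  have hz : a * a * a * z * 1 = a * a * a * z * z :=
    calc a * a * a * z * 1 = a * (a * z) * a := by rw [mul_one, hcube]
      _ = a * z * a * (a * z) := hbraid
      _ = a * a * a * z * z := hcube'
  rw [← mul_left_cancel hz, mul_one]

theorem MonoidHom.inv_mul_mem_center_of_map_eq {G H : Type*} [Group G] [Group H]
    {π : G →* H} (hcentral : π.ker ≤ Subgroup.center G) {a b : G} (h : π a = π b) :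
    a⁻¹ * b ∈ Subgroup.center G :=
  hcentral (by simp [MonoidHom.mem_ker, h])

theorem apply_eq_apply_one_of_forall_eq_succ {α : Type*} {f : ℕ → α} {m : ℕ}
    (h : ∀ i, 1 ≤ i → i < m → f i = f (i + 1)) : ∀ i, 1 ≤ i → i ≤ m → f i = f 1 := by
  intro i hi
  induction i, hi using Nat.le_induction with
  | base => intro; rfl
  | succ k hk ih => intro hkm; rw [← h k hk (by omega), ih (by omega)]

theorem braid_constant_of_constant_mod_center_general
    (n : ℕ) (G H : Type*) [Group G] [Group H]
    (π : G →* H)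
    (hcentral : π.ker ≤ Subgroup.center G)
    (g : ℕ → G)
    (hbraid : ∀ i, 1 ≤ i → i ≤ n - 2 →
      g i * g (i + 1) * g i = g (i + 1) * g i * g (i + 1))
    (hconst : ∀ i j, 1 ≤ i → i ≤ n - 1 → 1 ≤ j → j ≤ n - 1 →
      π (g i) = π (g j)) :
    ∀ i j, 1 ≤ i → i ≤ n - 1 → 1 ≤ j → j ≤ n - 1 → g i = g j := by
  have hadjacent : ∀ i, 1 ≤ i → i < n - 1 → g i = g (i + 1) := by
    intro i hi hin
    have hz := π.inv_mul_mem_center_of_map_eq hcentral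
      (hconst i (i + 1) hi (by omega) (by omega) (by omega))
    exact eq_of_braid_of_commute_inv_mul (Subgroup.mem_center_iff.mp hz (g i))
      (hbraid i hi (by omega))
  intro i j hi hin hj hjn
  rw [apply_eq_apply_one_of_forall_eq_succ hadjacent i hi hin,
    apply_eq_apply_one_of_forall_eq_succ hadjacent j hj hjn]

/-- Lemma 2.7: if the images of the braid generators under a central
extension `π : G → H` are all equal, then the generators themselves are
all equal. -/
theorem braid_constant_of_constant_mod_center
    (n : ℕ) (hn : 2 ≤ n) (G H : Type*) [Group G] [Group H]
    (π : G →* H) (hsurj : Function.Surjective π)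
    (hcentral : π.ker ≤ Subgroup.center G)
    (g : ℕ → G)
    (hbraid : ∀ i, 1 ≤ i → i ≤ n - 2 →
      g i * g (i + 1) * g i = g (i + 1) * g i * g (i + 1))
    (hcomm : ∀ i j, 1 ≤ i → i ≤ n - 1 → 1 ≤ j → j ≤ n - 1 →
      2 ≤ |(i : ℤ) - (j : ℤ)| → g i * g j = g j * g i)
    (hconst : ∀ i j, 1 ≤ i → i ≤ n - 1 → 1 ≤ j → j ≤ n - 1 →
      π (g i) = π (g j)) :
    ∀ i j, 1 ≤ i → i ≤ n - 1 → 1 ≤ j → j ≤ n - 1 → g i = g j :=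
  braid_constant_of_constant_mod_center_general n G H π hcentral g hbraid hconst
end

section
/- Let n ≥ 2, let π : G → H be a surjective group homomorphism whose kernel is contained in the center of G (a central extension), and let h_1, …, h_{n−1} ∈ H satisfy the braid relations: h_i h_{i+1} h_i = h_{i+1} h_i h_{i+1} for 1 ≤ i ≤ n−2, and h_i h_j = h_j h_i whenever |i−j| ≥ 2. Suppose that for some pair i, j with |i−j| ≥ 2 there exist elements u, v ∈ G with π(u) = h_i, π(v) = h_j, and u v = v u. Then there exist elements g_1, …, g_{n−1} ∈ G satisfying the braid relations (g_i g_{i+1} g_i = g_{i+1} g_i g_{i+1} for 1 ≤ i ≤ n−2 and g_i g_j = g_j g_i for |i−j| ≥ 2) with π(g_i) = h_i for all i; that is, the corresponding homomorphism B_n → H lifts to a homomorphism B_n → G. -/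
/-!
Lift the generators one at a time. If `a` lifts `h k` and `c` is any lift of `h (k + 1)`, the
defect `z = (c a c)⁻¹ (a c a)` lies in the kernel, hence is central, and `c z` is a lift of
`h (k + 1)` satisfying the braid relation with `a`.

Lifts of two commuting elements of `H` either all commute or none do, since lifts differ by
central elements. Conjugation by `h k * h (k + 1)` sends `h k` to `h (k + 1)` and fixes every
generator distant from both, so commuting lifts of one distant pair are transported to commuting
lifts of every distant pair.
-/

theorem two_le_abs_natCast_sub_iff {a b : ℕ} :
    2 ≤ |(a : ℤ) - (b : ℤ)| ↔ a + 2 ≤ b ∨ b + 2 ≤ a := by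
  rw [le_abs']
  omega

section CentralExtension

variable {G H : Type*} [Group G] [Group H] (π : G →* H)

def HasCommutingLifts (x y : H) : Prop :=
  ∃ u v : G, π u = x ∧ π v = y ∧ Commute u v

variable {π}

theorem HasCommutingLifts.symm {x y : H} (hxy : HasCommutingLifts π x y) :
    HasCommutingLifts π y x :=
  let ⟨u, v, hu, hv, huv⟩ := hxy
  ⟨v, u, hv, hu, huv.symm⟩

theorem hasCommutingLifts_comm {x y : H} :
    HasCommutingLifts π x y ↔ HasCommutingLifts π y x :=
  ⟨.symm, .symm⟩

theorem HasCommutingLifts.commute (hcentral : π.ker ≤ Subgroup.center G) {x y : H}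
    (hxy : HasCommutingLifts π x y) {u v : G} (hu : π u = x) (hv : π v = y) :
    Commute u v := by
  obtain ⟨u₀, v₀, hu₀, hv₀, huv₀⟩ := hxy
  have central : ∀ z ∈ π.ker, ∀ g, Commute g z := fun z hz =>
    Subgroup.mem_center_iff.1 (hcentral hz)
  have hc : u₀⁻¹ * u ∈ π.ker := by simp [hu, hu₀]
  have hd : v₀⁻¹ * v ∈ π.ker := by simp [hv, hv₀]
  rw [← mul_inv_cancel_left u₀ u, ← mul_inv_cancel_left v₀ v]
  exact (huv₀.mul_right (central _ hd u₀)).mul_left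
    ((central _ hc v₀).symm.mul_right (central _ hd _))

theorem HasCommutingLifts.conj (hsurj : Function.Surjective π) {x y : H}
    (hxy : HasCommutingLifts π x y) (w : H) :
    HasCommutingLifts π (w * x * w⁻¹) (w * y * w⁻¹) := by
  obtain ⟨u, v, hu, hv, huv⟩ := hxy
  obtain ⟨W, rfl⟩ := hsurj w
  exact ⟨W * u * W⁻¹, W * v * W⁻¹, by simp [hu], by simp [hv], huv.conj W⟩

theorem conj_eq_of_braid {x y : H} (hxy : x * y * x = y * x * y) :
    x * y * x * (x * y)⁻¹ = y := by
  rw [hxy]; group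

theorem hasCommutingLifts_iff_of_braid (hsurj : Function.Surjective π) {x y z : H}
    (hxy : x * y * x = y * x * y) (hzx : Commute z x) (hzy : Commute z y) :
    HasCommutingLifts π z x ↔ HasCommutingLifts π z y := by
  constructor
  · intro hzx'
    have := hzx'.conj hsurj (x * y)
    rwa [(hzx.mul_right hzy).symm.mul_inv_cancel, conj_eq_of_braid hxy] at this
  · intro hzy'
    have := hzy'.conj hsurj (y * x)
    rwa [(hzy.mul_right hzx).symm.mul_inv_cancel, conj_eq_of_braid hxy.symm] at this

end CentralExtension

section BraidGenerators

variable {G H : Type*} [Group G] [Group H] {π : G →* H} {n : ℕ} {h : ℕ → H}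

theorem hasCommutingLifts_iff_right (hsurj : Function.Surjective π)
    (hbraid : ∀ i, 1 ≤ i → i ≤ n - 2 → h i * h (i + 1) * h i = h (i + 1) * h i * h (i + 1))
    (hdist : ∀ a b, 1 ≤ a → a + 2 ≤ b → b ≤ n - 1 → Commute (h a) (h b))
    {a b : ℕ} (ha : 1 ≤ a) (hab : a + 2 ≤ b) (hb : b ≤ n - 1) :
    HasCommutingLifts π (h a) (h b) ↔ HasCommutingLifts π (h a) (h (a + 2)) := by
  induction b, hab using Nat.le_induction with
  | base => rfl
  | succ b hab ih =>
    rw [← ih (by omega)]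
    exact (hasCommutingLifts_iff_of_braid hsurj (hbraid b (by omega) (by omega))
      (hdist a b ha hab (by omega)) (hdist a (b + 1) ha (by omega) hb)).symm

theorem hasCommutingLifts_iff_left (hsurj : Function.Surjective π)
    (hbraid : ∀ i, 1 ≤ i → i ≤ n - 2 → h i * h (i + 1) * h i = h (i + 1) * h i * h (i + 1))
    (hdist : ∀ a b, 1 ≤ a → a + 2 ≤ b → b ≤ n - 1 → Commute (h a) (h b))
    {a b : ℕ} (ha : 1 ≤ a) (hab : a + 2 ≤ b) (hb : b ≤ n - 1) :
    HasCommutingLifts π (h a) (h b) ↔ HasCommutingLifts π (h 1) (h b) := by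
  induction a, ha using Nat.le_induction with
  | base => rfl
  | succ a ha ih =>
    rw [← ih (by omega), hasCommutingLifts_comm, hasCommutingLifts_comm (x := h a)]
    exact (hasCommutingLifts_iff_of_braid hsurj (hbraid a ha (by omega))
      (hdist a b ha (by omega) hb).symm (hdist (a + 1) b (by omega) hab hb).symm).symm

theorem hasCommutingLifts_iff_of_distant (hsurj : Function.Surjective π)
    (hbraid : ∀ i, 1 ≤ i → i ≤ n - 2 → h i * h (i + 1) * h i = h (i + 1) * h i * h (i + 1))
    (hdist : ∀ a b, 1 ≤ a → a + 2 ≤ b → b ≤ n - 1 → Commute (h a) (h b))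
    {a b : ℕ} (ha : 1 ≤ a) (hab : a + 2 ≤ b) (hb : b ≤ n - 1) :
    HasCommutingLifts π (h a) (h b) ↔ HasCommutingLifts π (h 1) (h (n - 1)) := by
  rw [hasCommutingLifts_iff_left hsurj hbraid hdist ha hab hb,
    hasCommutingLifts_iff_right hsurj hbraid hdist le_rfl (by omega) hb,
    hasCommutingLifts_iff_right hsurj hbraid hdist le_rfl (by omega) le_rfl]

end BraidGenerators

section BraidLift

variable {G H : Type*} [Group G] [Group H] {π : G →* H}

def braidCorrection (a c : G) : G :=
  c * ((c * a * c)⁻¹ * (a * c * a))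

theorem map_braidCorrection {a c : G} (hπ : π a * π c * π a = π c * π a * π c) :
    π (braidCorrection a c) = π c := by
  simp only [braidCorrection, map_mul, map_inv, hπ, inv_mul_cancel, mul_one]

theorem braidCorrection_braid (hcentral : π.ker ≤ Subgroup.center G) {a c : G}
    (hπ : π a * π c * π a = π c * π a * π c) :
    a * braidCorrection a c * a = braidCorrection a c * a * braidCorrection a c := by
  set z := (c * a * c)⁻¹ * (a * c * a)
  have hz : ∀ g, Commute g z := Subgroup.mem_center_iff.1 <| hcentral <| by
    simp only [z, MonoidHom.mem_ker, map_mul, map_inv, hπ, inv_mul_cancel]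
  have haca : a * c * a = c * a * c * z := (mul_inv_cancel_left _ _).symm
  show a * (c * z) * a = c * z * a * (c * z)
  clear_value z
  calc a * (c * z) * a = a * c * a * z := by rw [← mul_assoc, (hz a).symm.right_comm]
    _ = c * a * c * z * z := by rw [haca]
    _ = c * z * a * (c * z) := by
      rw [(hz a).symm.right_comm c, ← mul_assoc, (hz c).symm.right_comm (c * a)]

def braidLift (t : ℕ → G) : ℕ → G
  | 0 => 1
  | 1 => t 1
  | k + 2 => braidCorrection (braidLift t (k + 1)) (t (k + 2))

variable {n : ℕ} {h : ℕ → H} {t : ℕ → G}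

theorem map_braidLift (ht : ∀ k, π (t k) = h k)
    (hbraid : ∀ i, 1 ≤ i → i ≤ n - 2 → h i * h (i + 1) * h i = h (i + 1) * h i * h (i + 1)) :
    ∀ k, 1 ≤ k → k ≤ n - 1 → π (braidLift t k) = h k
  | 0, _, _ => by omega
  | 1, _, _ => ht 1
  | k + 2, _, hk => by
    refine (map_braidCorrection ?_).trans (ht _)
    rw [map_braidLift ht hbraid (k + 1) (by omega) (by omega), ht]
    exact hbraid (k + 1) (by omega) (by omega)

theorem braidLift_braid (hcentral : π.ker ≤ Subgroup.center G) (ht : ∀ k, π (t k) = h k)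
    (hbraid : ∀ i, 1 ≤ i → i ≤ n - 2 → h i * h (i + 1) * h i = h (i + 1) * h i * h (i + 1))
    {k : ℕ} (hk1 : 1 ≤ k) (hk2 : k ≤ n - 2) :
    braidLift t k * braidLift t (k + 1) * braidLift t k =
      braidLift t (k + 1) * braidLift t k * braidLift t (k + 1) := by
  obtain ⟨m, rfl⟩ : ∃ m, k = m + 1 := ⟨k - 1, by omega⟩
  apply braidCorrection_braid hcentral
  rw [map_braidLift ht hbraid (m + 1) hk1 (by omega), ht]
  exact hbraid (m + 1) hk1 hk2

end BraidLift

theorem braid_lift_of_commuting_lifts_general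
    (n : ℕ) (G H : Type*) [Group G] [Group H]
    (π : G →* H) (hsurj : Function.Surjective π)
    (hcentral : π.ker ≤ Subgroup.center G)
    (h : ℕ → H)
    (hbraid : ∀ i, 1 ≤ i → i ≤ n - 2 →
      h i * h (i + 1) * h i = h (i + 1) * h i * h (i + 1))
    (hcomm : ∀ i j, 1 ≤ i → i ≤ n - 1 → 1 ≤ j → j ≤ n - 1 →
      2 ≤ |(i : ℤ) - (j : ℤ)| → h i * h j = h j * h i)
    (i j : ℕ) (hi1 : 1 ≤ i) (hi2 : i ≤ n - 1) (hj1 : 1 ≤ j) (hj2 : j ≤ n - 1)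
    (hij : 2 ≤ |(i : ℤ) - (j : ℤ)|)
    (u v : G) (hu : π u = h i) (hv : π v = h j) (huv : u * v = v * u) :
    ∃ g : ℕ → G,
      (∀ i, 1 ≤ i → i ≤ n - 2 →
        g i * g (i + 1) * g i = g (i + 1) * g i * g (i + 1)) ∧
      (∀ i j, 1 ≤ i → i ≤ n - 1 → 1 ≤ j → j ≤ n - 1 →
        2 ≤ |(i : ℤ) - (j : ℤ)| → g i * g j = g j * g i) ∧
      (∀ i, 1 ≤ i → i ≤ n - 1 → π (g i) = h i) := by
  choose t ht using fun k => hsurj (h k)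
  have hdist : ∀ a b, 1 ≤ a → a + 2 ≤ b → b ≤ n - 1 → Commute (h a) (h b) :=
    fun a b ha hab hb =>
      hcomm a b ha (by omega) (by omega) hb (two_le_abs_natCast_sub_iff.2 (.inl hab))
  have hlifts : ∀ a b, 1 ≤ a → a + 2 ≤ b → b ≤ n - 1 → HasCommutingLifts π (h a) (h b) := by
    have huv' : HasCommutingLifts π (h i) (h j) := ⟨u, v, hu, hv, huv⟩
    intro a b ha hab hb
    rw [hasCommutingLifts_iff_of_distant hsurj hbraid hdist ha hab hb]
    rcases two_le_abs_natCast_sub_iff.1 hij with hij | hji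
    · exact (hasCommutingLifts_iff_of_distant hsurj hbraid hdist hi1 hij hj2).1 huv'
    · exact (hasCommutingLifts_iff_of_distant hsurj hbraid hdist hj1 hji hi2).1 huv'.symm
  have hg := map_braidLift ht hbraid
  refine ⟨braidLift t, fun k hk1 hk2 => braidLift_braid hcentral ht hbraid hk1 hk2,
    fun a b ha1 ha2 hb1 hb2 hab => ?_, hg⟩
  rcases two_le_abs_natCast_sub_iff.1 hab with hab | hba
  · exact (hlifts a b ha1 hab hb2).commute hcentral (hg a ha1 ha2) (hg b hb1 hb2)
  · exact ((hlifts b a hb1 hba ha2).commute hcentral (hg b hb1 hb2) (hg a ha1 ha2)).symm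

/-- Proposition 2.8: a representation of the braid group to `H` lifts
through a central extension `π : G → H` provided some pair of distant
generators has commuting lifts. -/
theorem braid_lift_of_commuting_lifts
    (n : ℕ) (hn : 2 ≤ n) (G H : Type*) [Group G] [Group H]
    (π : G →* H) (hsurj : Function.Surjective π)
    (hcentral : π.ker ≤ Subgroup.center G)
    (h : ℕ → H)
    (hbraid : ∀ i, 1 ≤ i → i ≤ n - 2 →
      h i * h (i + 1) * h i = h (i + 1) * h i * h (i + 1))
    (hcomm : ∀ i j, 1 ≤ i → i ≤ n - 1 → 1 ≤ j → j ≤ n - 1 →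
      2 ≤ |(i : ℤ) - (j : ℤ)| → h i * h j = h j * h i)
    (i j : ℕ) (hi1 : 1 ≤ i) (hi2 : i ≤ n - 1) (hj1 : 1 ≤ j) (hj2 : j ≤ n - 1)
    (hij : 2 ≤ |(i : ℤ) - (j : ℤ)|)
    (u v : G) (hu : π u = h i) (hv : π v = h j) (huv : u * v = v * u) :
    ∃ g : ℕ → G,
      (∀ i, 1 ≤ i → i ≤ n - 2 →
        g i * g (i + 1) * g i = g (i + 1) * g i * g (i + 1)) ∧
      (∀ i j, 1 ≤ i → i ≤ n - 1 → 1 ≤ j → j ≤ n - 1 →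
        2 ≤ |(i : ℤ) - (j : ℤ)| → g i * g j = g j * g i) ∧
      (∀ i, 1 ≤ i → i ≤ n - 1 → π (g i) = h i) :=
  braid_lift_of_commuting_lifts_general n G H π hsurj hcentral h hbraid hcomm i j hi1 hi2 hj1 hj2
    hij u v hu hv huv
end

section
/- Let K be a field, let V be a finite-dimensional vector space over K, let W ⊆ V be a linear subspace, and let T : V → V be an invertible linear transformation. Define d_0 := dim V and, for k ≥ 1, d_k := dim(W ∩ T(W) ∩ T²(W) ∩ ⋯ ∩ T^{k−1}(W)). Then the sequence d_0, d_1, d_2, … is weakly convex: for all m ≥ 1, d_m − d_{m+1} ≥ d_{m+1} − d_{m+2}. -/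
/-!
Write `U k = W ∩ T(W) ∩ ⋯ ∩ T^{k-1}(W)`, so that `U (k + 1) = W ∩ T(U k)` and the `U k` decrease.
Then `U (m + 2) = U (m + 1) ∩ T(U (m + 1))`, while `U (m + 1) + T(U (m + 1)) ⊆ T(U m)`.
Since `T` preserves dimensions, the dimension formula for `A + B` and `A ∩ B` gives
`2 d (m + 1) ≤ d m + d (m + 2)`.
-/

open Submodule

def Submodule.iteratedInf {R M : Type*} [Semiring R] [AddCommMonoid M] [Module R M]
    (W : Submodule R M) (T : M ≃ₗ[R] M) (k : ℕ) : Submodule R M :=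
  ⨅ j ∈ Finset.range k, W.map ((T ^ j : M ≃ₗ[R] M) : M →ₗ[R] M)

namespace Submodule.iteratedInf

variable {R M : Type*} [Semiring R] [AddCommMonoid M] [Module R M]
  (W : Submodule R M) (T : M ≃ₗ[R] M)

theorem mem_iff {k : ℕ} {x : M} :
    x ∈ W.iteratedInf T k ↔ ∀ j < k, x ∈ W.map ((T ^ j : M ≃ₗ[R] M) : M →ₗ[R] M) := by
  simp [iteratedInf, mem_iInf]

theorem mem_map_pow_succ_iff {j : ℕ} {x : M} :
    x ∈ W.map ((T ^ (j + 1) : M ≃ₗ[R] M) : M →ₗ[R] M) ↔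
      T.symm x ∈ W.map ((T ^ j : M ≃ₗ[R] M) : M →ₗ[R] M) := by
  simp only [mem_map_equiv, pow_succ', LinearEquiv.mul_eq_trans, LinearEquiv.symm_trans_apply]

theorem succ_eq (k : ℕ) :
    W.iteratedInf T (k + 1) = W ⊓ (W.iteratedInf T k).map (T : M →ₗ[R] M) := by
  ext x
  rw [mem_inf, mem_map_equiv, mem_iff, mem_iff, Nat.forall_lt_succ_left]
  simp only [mem_map_pow_succ_iff, pow_zero, LinearEquiv.one_eq_refl,
    LinearEquiv.refl_toLinearMap, map_id]

theorem succ_le (k : ℕ) : W.iteratedInf T (k + 1) ≤ W.iteratedInf T k := fun _ hx =>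
  (mem_iff W T).2 fun j hj => (mem_iff W T).1 hx j (by omega)

theorem succ_succ_eq_inf_map (k : ℕ) :
    W.iteratedInf T (k + 2) =
      W.iteratedInf T (k + 1) ⊓ (W.iteratedInf T (k + 1)).map (T : M →ₗ[R] M) := by
  have hmap := map_mono (f := (T : M →ₗ[R] M)) (succ_le W T k)
  rw [succ_eq W T (k + 1)]
  nth_rewrite 2 [succ_eq W T k]
  rw [inf_assoc, inf_eq_right.2 hmap]

theorem succ_sup_map_le_map (k : ℕ) :
    W.iteratedInf T (k + 1) ⊔ (W.iteratedInf T (k + 1)).map (T : M →ₗ[R] M) ≤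
      (W.iteratedInf T k).map (T : M →ₗ[R] M) :=
  sup_le (succ_eq W T k ▸ inf_le_right) (map_mono (succ_le W T k))

end Submodule.iteratedInf

theorem Submodule.finrank_add_finrank_le_of_sup_le {K V : Type*} [DivisionRing K]
    [AddCommGroup V] [Module K V] [FiniteDimensional K V] {A B C : Submodule K V}
    (h : A ⊔ B ≤ C) :
    Module.finrank K A + Module.finrank K B ≤ Module.finrank K C + Module.finrank K ↥(A ⊓ B) := by
  rw [← finrank_sup_add_finrank_inf_eq A B]
  exact Nat.add_le_add_right (finrank_mono h) _

theorem dims_of_iterated_intersection_weakly_convex_general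
    (K : Type*) [Field K] (V : Type*) [AddCommGroup V] [Module K V]
    [FiniteDimensional K V]
    (W : Submodule K V) (T : V ≃ₗ[K] V)
    (d : ℕ → ℕ)
    (hd : ∀ k, 1 ≤ k →
      d k = Module.finrank K
        ↥(⨅ j ∈ Finset.range k, W.map ((T ^ j : V ≃ₗ[K] V) : V →ₗ[K] V))) :
    ∀ m, 1 ≤ m → (d m : ℤ) - (d (m + 1) : ℤ) ≥ (d (m + 1) : ℤ) - (d (m + 2) : ℤ) := by
  intro m hm
  have hconvex := finrank_add_finrank_le_of_sup_le (iteratedInf.succ_sup_map_le_map W T m)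
  rw [← iteratedInf.succ_succ_eq_inf_map, LinearEquiv.finrank_map_eq,
    LinearEquiv.finrank_map_eq] at hconvex
  have hdm : d m = Module.finrank K (W.iteratedInf T m) := hd m hm
  have hdm1 : d (m + 1) = Module.finrank K (W.iteratedInf T (m + 1)) := hd (m + 1) (by omega)
  have hdm2 : d (m + 2) = Module.finrank K (W.iteratedInf T (m + 2)) := hd (m + 2) (by omega)
  omega

/-- Lemma 3.2: for an invertible linear transformation `T` of a
finite-dimensional vector space `V` and a subspace `W`, the sequence
`d 0 = dim V`, `d k = dim (W ∩ T(W) ∩ ⋯ ∩ T^{k-1}(W))` is weakly convex. -/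
theorem dims_of_iterated_intersection_weakly_convex
    (K : Type*) [Field K] (V : Type*) [AddCommGroup V] [Module K V]
    [FiniteDimensional K V]
    (W : Submodule K V) (T : V ≃ₗ[K] V)
    (d : ℕ → ℕ)
    (hd0 : d 0 = Module.finrank K V)
    (hd : ∀ k, 1 ≤ k →
      d k = Module.finrank K
        ↥(⨅ j ∈ Finset.range k, W.map ((T ^ j : V ≃ₗ[K] V) : V →ₗ[K] V))) :
    ∀ m, 1 ≤ m → (d m : ℤ) - (d (m + 1) : ℤ) ≥ (d (m + 1) : ℤ) - (d (m + 2) : ℤ) :=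
  dims_of_iterated_intersection_weakly_convex_general K V W T d hd
end

section
/- Let G be a finite group which is not solvable, and let K be a normal subgroup of G maximal among normal subgroups with non-solvable quotient (i.e., G/K is not solvable, and for every normal subgroup K′ of G properly containing K, the quotient G/K′ is solvable). Then G/K is almost characteristically simple: there exist a nonabelian finite simple group H and a positive integer k such that G/K contains a normal subgroup N isomorphic to the direct power H^k whose centralizer in G/K is trivial; equivalently, the conjugation action gives embeddings H^k ≤ G/K ≤ Aut(H^k). -/
/-!
By maximality of `K`, every proper quotient of `Q = G ⧸ K` is solvable while `Q` is not, so two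
nontrivial normal subgroups of `Q` can never intersect trivially: `Q` would embed in the product of
two solvable quotients. Let `N` be a minimal normal subgroup of `Q`. It is not solvable, and it is
the join of the `Q`-conjugates of a minimal normal subgroup `S` of `N`. An irredundant subfamily of
these conjugates is independent, its members centralize each other, and so each is simple and `N`
is their direct product: `N ≅ S^k` with `S` simple and nonabelian. Hence `N` has trivial centre,
i.e. `N ⊓ C_Q(N) = 1`, which forces `C_Q(N) = 1`.
-/

open Subgroup

theorem Minimal.not_le_sSup_diff_singleton {α : Type*} [CompleteLattice α] {b : α}
    {𝒯 : Set α} (h𝒯 : Minimal (fun 𝒮 : Set α => sSup 𝒮 = b) 𝒯) {a : α} (ha : a ∈ 𝒯) :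
    ¬ a ≤ sSup (𝒯 \ {a}) := by
  intro hle
  have : sSup (𝒯 \ {a}) = b := by
    rw [← h𝒯.prop, ← sup_eq_right.mpr hle, ← sSup_insert, Set.insert_sdiff_singleton,
      Set.insert_eq_of_mem ha]
  exact (h𝒯.2 this Set.sdiff_subset ha).2 rfl

namespace Subgroup

variable {G G' : Type*} [Group G] [Group G']

def IsMinimalNormal (N : Subgroup G) : Prop :=
  Minimal (fun M : Subgroup G => M.Normal ∧ M ≠ ⊥) N

theorem exists_isMinimalNormal [Finite G] [Nontrivial G] : ∃ N : Subgroup G, N.IsMinimalNormal :=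
  exists_minimal_of_wellFoundedLT _ ⟨⊤, inferInstance, top_ne_bot⟩

namespace IsMinimalNormal

variable {N : Subgroup G}

theorem normal (hN : N.IsMinimalNormal) : N.Normal := hN.prop.1

theorem ne_bot (hN : N.IsMinimalNormal) : N ≠ ⊥ := hN.prop.2

theorem eq_of_le (hN : N.IsMinimalNormal) {M : Subgroup G} [M.Normal] (hM : M ≠ ⊥)
    (hMN : M ≤ N) : M = N :=
  Minimal.eq_of_le hN ⟨‹_›, hM⟩ hMN

theorem map_mulEquiv (hN : N.IsMinimalNormal) (e : G ≃* G') :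
    (N.map e.toMonoidHom).IsMinimalNormal := by
  have := hN.normal
  refine ⟨⟨this.map _ e.surjective, ?_⟩, fun M ⟨hMn, hM⟩ hMN => ?_⟩
  · rw [Ne, map_eq_bot_iff_of_injective _ e.injective]
    exact hN.ne_bot
  · have hcomap : M.comap e.toMonoidHom = N := by
      refine hN.eq_of_le (fun h => hM ?_) ?_
      · rw [← map_comap_eq_self_of_surjective (f := e.toMonoidHom) e.surjective M, h, map_bot]
      · rw [← comap_map_eq_self_of_injective (f := e.toMonoidHom) e.injective N]
        exact comap_mono hMN
    rw [← hcomap, map_comap_eq_self_of_surjective (f := e.toMonoidHom) e.surjective]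

theorem isSimpleGroup (hN : N.IsMinimalNormal) (hsup : N ⊔ centralizer N = ⊤) :
    IsSimpleGroup N := by
  have : Nontrivial N := (nontrivial_iff_ne_bot N).mpr hN.ne_bot
  refine ⟨fun U hU => ?_⟩
  set U' := U.map N.subtype
  have hU'N : U' ≤ N := map_subtype_le U
  have : U'.Normal := by
    rw [← normalizer_eq_top_iff, eq_top_iff, ← hsup, sup_le_iff]
    refine ⟨(normal_subgroupOf_iff_le_normalizer hU'N).mp ?_,
      (centralizer_le hU'N).trans (centralizer_le_normalizer _)⟩
    rwa [← comap_subtype, comap_map_eq_self_of_injective N.subtype_injective]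
  rcases eq_or_ne U' ⊥ with h | h
  · exact .inl ((map_eq_bot_iff_of_injective _ N.subtype_injective).mp h)
  · refine .inr (map_injective N.subtype_injective ?_)
    change U' = _
    rw [hN.eq_of_le h hU'N, ← MonoidHom.range_eq_map, range_subtype]

end IsMinimalNormal

theorem sSupIndep_of_isMinimalNormal {𝒯 : Set (Subgroup G)}
    (h𝒯 : ∀ T ∈ 𝒯, T.IsMinimalNormal) (hirr : ∀ T ∈ 𝒯, ¬ T ≤ sSup (𝒯 \ {T})) :
    sSupIndep 𝒯 := by
  intro T hT
  have := (h𝒯 T hT).normal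
  have := sSup_normal (𝒯 \ {T}) fun U hU => (h𝒯 U hU.1).normal
  rw [disjoint_iff]
  by_contra hne
  exact hirr T hT (inf_eq_left.mp ((h𝒯 T hT).eq_of_le hne inf_le_left))

theorem le_centralizer_of_sSupIndep {𝒯 : Set (Subgroup G)} (h𝒯 : ∀ T ∈ 𝒯, T.Normal)
    (hind : sSupIndep 𝒯) {T U : Subgroup G} (hT : T ∈ 𝒯) (hU : U ∈ 𝒯) (hTU : T ≠ U) :
    U ≤ centralizer T := fun y hy =>
  mem_centralizer_iff.mpr fun x hx =>
    commute_of_normal_of_disjoint T U (h𝒯 T hT) (h𝒯 U hU) (hind.pairwiseDisjoint hT hU hTU)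
      x y hx hy

theorem nonempty_mulEquiv_pi_of_sSupIndep [Finite G] {𝒯 : Set (Subgroup G)}
    (h𝒯 : ∀ T ∈ 𝒯, T.Normal) (hind : sSupIndep 𝒯) (htop : sSup 𝒯 = ⊤) :
    Nonempty (G ≃* Π T : 𝒯, (T : Subgroup G)) := by
  have : Fintype 𝒯 := Fintype.ofFinite 𝒯
  have hcomm : Pairwise fun T U : 𝒯 =>
      ∀ x y : G, x ∈ (T : Subgroup G) → y ∈ (U : Subgroup G) → Commute x y :=
    fun T U hTU x y hx hy => (mem_centralizer_iff.mp
      (le_centralizer_of_sSupIndep h𝒯 hind T.2 U.2 (Subtype.coe_ne_coe.mpr hTU) hy) x hx)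
  refine ⟨(MulEquiv.ofBijective (noncommPiCoprod hcomm)
    ⟨injective_noncommPiCoprod_of_iSupIndep ((sSupIndep_iff 𝒯).mp hind), ?_⟩).symm⟩
  rw [← MonoidHom.range_eq_top, noncommPiCoprod_range, ← sSup_eq_iSup', htop]

theorem exists_isSimpleGroup_mulEquiv_pi [Finite G] {𝒞 : Set (Subgroup G)}
    (h𝒞 : ∀ T ∈ 𝒞, T.IsMinimalNormal) (htop : sSup 𝒞 = ⊤) :
    ∃ 𝒯 ⊆ 𝒞, (∀ T ∈ 𝒯, IsSimpleGroup T) ∧ Nonempty (G ≃* Π T : 𝒯, (T : Subgroup G)) := by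
  obtain ⟨𝒯, h𝒯𝒞, hmin⟩ := exists_minimal_le_of_wellFoundedLT (fun 𝒮 => sSup 𝒮 = ⊤) 𝒞 htop
  have hmn : ∀ T ∈ 𝒯, T.IsMinimalNormal := fun T hT => h𝒞 T (h𝒯𝒞 hT)
  have hind : sSupIndep 𝒯 :=
    sSupIndep_of_isMinimalNormal hmn fun T hT => hmin.not_le_sSup_diff_singleton hT
  have hn : ∀ T ∈ 𝒯, T.Normal := fun T hT => (hmn T hT).normal
  refine ⟨𝒯, h𝒯𝒞, fun T hT => (hmn T hT).isSimpleGroup ?_,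
    nonempty_mulEquiv_pi_of_sSupIndep hn hind hmin.prop⟩
  rw [eq_top_iff, ← hmin.prop, ← Set.insert_eq_of_mem hT, ← Set.insert_sdiff_singleton, sSup_insert]
  exact sup_le_sup_left (sSup_le fun U hU =>
    le_centralizer_of_sSupIndep hn hind hT hU.1 (Ne.symm hU.2)) T

theorem IsMinimalNormal.iSup_map_conjNormal_eq_top {N : Subgroup G} [N.Normal]
    (hN : N.IsMinimalNormal) {S : Subgroup N} (hS : S ≠ ⊥) :
    ⨆ g : G, S.map (MulAut.conjNormal g).toMonoidHom = ⊤ := by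
  set M := ⨆ g : G, S.map (MulAut.conjNormal g).toMonoidHom
  have hM : ∀ g : G, M.map (MulAut.conjNormal g).toMonoidHom ≤ M := fun g => by
    rw [map_iSup]
    refine iSup_mono' fun h => ⟨g * h, ?_⟩
    rw [map_map, map_mul]
    rfl
  have : (M.map N.subtype).Normal :=
    ⟨fun _ ⟨y, hy, hxy⟩ g => hxy ▸ ⟨MulAut.conjNormal g y, hM g ⟨y, hy, rfl⟩, by simp⟩⟩
  have hne : M.map N.subtype ≠ ⊥ := by
    rw [Ne, map_eq_bot_iff_of_injective _ N.subtype_injective]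
    refine ne_bot_of_le_ne_bot hS (le_iSup_of_le 1 ?_)
    rw [map_one]
    exact (map_id S).ge
  change M = ⊤
  apply map_injective N.subtype_injective
  rw [hN.eq_of_le hne (map_subtype_le M), ← MonoidHom.range_eq_map, range_subtype]

theorem IsMinimalNormal.exists_isSimpleGroup_mulEquiv_fin_pi [Finite G] {N : Subgroup G}
    [N.Normal] (hN : N.IsMinimalNormal) :
    ∃ (S : Subgroup N) (k : ℕ), IsSimpleGroup S ∧ 1 ≤ k ∧ Nonempty (N ≃* (Fin k → S)) := by
  have : Nontrivial N := (nontrivial_iff_ne_bot N).mpr hN.ne_bot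
  obtain ⟨S, hS⟩ := exists_isMinimalNormal (G := N)
  obtain ⟨𝒯, h𝒯, hsimple, ⟨e⟩⟩ := exists_isSimpleGroup_mulEquiv_pi
    (𝒞 := Set.range fun g : G => S.map (MulAut.conjNormal g).toMonoidHom)
    (by rintro _ ⟨g, rfl⟩; exact hS.map_mulEquiv _)
    (by rw [sSup_range]; exact hN.iSup_map_conjNormal_eq_top hS.ne_bot)
  have hconj (T : 𝒯) : (T : Subgroup N) ≃* S :=
    have hT := h𝒯 T.2
    (MulEquiv.subgroupCongr hT.choose_spec.symm).trans
      (S.equivMapOfInjective _ (MulAut.conjNormal hT.choose).injective).symm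
  have : Nonempty 𝒯 := by
    by_contra h
    rw [not_nonempty_iff] at h
    exact not_subsingleton N e.toEquiv.subsingleton
  have T : 𝒯 := Classical.arbitrary _
  have := hsimple T T.2
  exact ⟨S, Nat.card 𝒯, (hconj T).symm.isSimpleGroup, Nat.card_pos,
    ⟨(e.trans (MulEquiv.piCongrRight hconj)).trans
      (MulEquiv.arrowCongr (Finite.equivFin 𝒯) (MulEquiv.refl S))⟩⟩

theorem center_pi_eq_bot {ι : Type*} {S : ι → Type*} [∀ i, Group (S i)]
    (hS : ∀ i, center (S i) = ⊥) : center (Π i, S i) = ⊥ := by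
  rw [Subgroup.center_pi, funext hS, pi_bot]

theorem center_eq_bot_of_mulEquiv (e : G ≃* G') (h : center G' = ⊥) : center G = ⊥ := by
  rw [eq_bot_iff]
  intro z hz
  have : e z ∈ center G' := mem_center_iff.mpr fun g => by
    obtain ⟨g, rfl⟩ := e.surjective g
    rw [← map_mul, ← map_mul, mem_center_iff.mp hz]
  rw [h, mem_bot, map_eq_one_iff e e.injective] at this
  exact this

theorem inf_centralizer_eq_bot {N : Subgroup G} (h : center N = ⊥) : N ⊓ centralizer N = ⊥ := by
  rw [eq_bot_iff]
  rintro x ⟨hxN, hxC⟩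
  have : (⟨x, hxN⟩ : N) ∈ center N :=
    mem_center_iff.mpr fun g => Subtype.ext (mem_centralizer_iff.mp hxC g g.2)
  rw [h, mem_bot] at this
  exact congrArg Subtype.val this

end Subgroup

theorem IsSimpleGroup.center_eq_bot {S : Type*} [Group S] [IsSimpleGroup S]
    (hS : ∃ a b : S, a * b ≠ b * a) : center S = ⊥ := by
  refine (IsSimpleGroup.eq_bot_or_eq_top_of_normal _ inferInstance).resolve_right fun h => ?_
  obtain ⟨a, b, hab⟩ := hS
  exact hab (mem_center_iff.mp (h ▸ mem_top b) a)

section Solvable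

open QuotientGroup

variable {G : Type*} [Group G]

theorem isSolvable_of_inf_eq_bot (A B : Subgroup G) [A.Normal] [B.Normal]
    [Group.IsSolvable (G ⧸ A)] [Group.IsSolvable (G ⧸ B)] (h : A ⊓ B = ⊥) : Group.IsSolvable G :=
  Group.isSolvable_of_isSolvable_injective (f := (mk' A).prod (mk' B)) <| by
    rw [← MonoidHom.ker_eq_bot_iff, MonoidHom.ker_prod, ker_mk', ker_mk', h]

theorem isSolvable_quotient_quotient_of_ne_bot {K : Subgroup G} [K.Normal]
    (hmax : ∀ K' : Subgroup G, ∀ _ : K'.Normal, K < K' → Group.IsSolvable (G ⧸ K'))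
    (M : Subgroup (G ⧸ K)) [M.Normal] (hM : M ≠ ⊥) : Group.IsSolvable ((G ⧸ K) ⧸ M) := by
  have hlt : K < M.comap (mk' K) := by
    refine lt_of_eq_of_lt (ker_mk' K).symm ?_
    rwa [← MonoidHom.comap_bot, comap_lt_comap_of_surjective (mk'_surjective K),
      bot_lt_iff_ne_bot]
  have := hmax _ inferInstance hlt
  exact Group.isSolvable_of_surjective (map_surjective_of_surjective _ M (mk' K)
    ((mk'_surjective M).comp (mk'_surjective K)) le_rfl)

theorem inf_ne_bot_of_not_isSolvable (hG : ¬ Group.IsSolvable G)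
    (hquot : ∀ (M : Subgroup G) [M.Normal], M ≠ ⊥ → Group.IsSolvable (G ⧸ M))
    {A B : Subgroup G} [A.Normal] [B.Normal] (hA : A ≠ ⊥) (hB : B ≠ ⊥) : A ⊓ B ≠ ⊥ := by
  have := hquot A hA
  have := hquot B hB
  exact fun h => hG (isSolvable_of_inf_eq_bot A B h)

theorem not_isSolvable_of_ne_bot (hG : ¬ Group.IsSolvable G)
    (hquot : ∀ (M : Subgroup G) [M.Normal], M ≠ ⊥ → Group.IsSolvable (G ⧸ M))
    {N : Subgroup G} [N.Normal] (hN : N ≠ ⊥) : ¬ Group.IsSolvable N := by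
  have := hquot N hN
  rw [Group.isSolvable_iff_subgroup_quotient N] at hG
  tauto

end Solvable

theorem minimal_nonsolvable_quotient_almost_characteristically_simple_general
    (G : Type*) [Group G] [Finite G]
    (K : Subgroup G) [K.Normal] (hK : ¬ IsSolvable (G ⧸ K))
    (hmax : ∀ K' : Subgroup G, ∀ _ : K'.Normal, K < K' → IsSolvable (G ⧸ K')) :
    ∃ (H : Type) (_ : Group H) (_ : Finite H),
      IsSimpleGroup H ∧ (∃ a b : H, a * b ≠ b * a) ∧
      ∃ k : ℕ, 1 ≤ k ∧
        ∃ N : Subgroup (G ⧸ K), N.Normal ∧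
          Nonempty (N ≃* (Fin k → H)) ∧
          Subgroup.centralizer (N : Set (G ⧸ K)) = ⊥ := by
  have hquot := isSolvable_quotient_quotient_of_ne_bot hmax
  have : Nontrivial (G ⧸ K) :=
    not_subsingleton_iff_nontrivial.mp fun _ => hK (inferInstance : Group.IsSolvable (G ⧸ K))
  obtain ⟨N, hN⟩ := exists_isMinimalNormal (G := G ⧸ K)
  have := hN.normal
  obtain ⟨S, k, hS, hk, ⟨e⟩⟩ := hN.exists_isSimpleGroup_mulEquiv_fin_pi
  have hS_noncomm : ∃ a b : S, a * b ≠ b * a := by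
    by_contra! hcomm
    have := Group.isSolvable_of_comm fun (x y : Fin k → S) => funext fun i => hcomm (x i) (y i)
    exact not_isSolvable_of_ne_bot hK hquot hN.ne_bot
      (Group.isSolvable_of_isSolvable_injective (f := e.toMonoidHom) e.injective)
  have hcenter : center N = ⊥ :=
    center_eq_bot_of_mulEquiv e (center_pi_eq_bot fun _ => IsSimpleGroup.center_eq_bot hS_noncomm)
  have hcent : centralizer (N : Set (G ⧸ K)) = ⊥ := by
    by_contra hC
    exact inf_ne_bot_of_not_isSolvable hK hquot hN.ne_bot hC (inf_centralizer_eq_bot hcenter)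
  let f : Shrink.{0} S ≃* S := Shrink.mulEquiv
  obtain ⟨a, b, hab⟩ := hS_noncomm
  refine ⟨Shrink.{0} S, inferInstance, inferInstance, f.isSimpleGroup,
    ⟨f.symm a, f.symm b, fun h => hab ?_⟩,
    k, hk, N, hN.normal, ⟨e.trans (MulEquiv.arrowCongr (Equiv.refl _) f.symm)⟩, hcent⟩
  simpa using congrArg f h

/-- Proposition 4.2: a minimal non-solvable quotient of a finite group is
almost characteristically simple: it has a normal subgroup isomorphic to
`H^k` (with `H` a nonabelian finite simple group, `k ≥ 1`) whose
centralizer is trivial. -/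
theorem minimal_nonsolvable_quotient_almost_characteristically_simple
    (G : Type*) [Group G] [Finite G] (hG : ¬ IsSolvable G)
    (K : Subgroup G) [K.Normal] (hK : ¬ IsSolvable (G ⧸ K))
    (hmax : ∀ K' : Subgroup G, ∀ _ : K'.Normal, K < K' → IsSolvable (G ⧸ K')) :
    ∃ (H : Type) (_ : Group H) (_ : Finite H),
      IsSimpleGroup H ∧ (∃ a b : H, a * b ≠ b * a) ∧
      ∃ k : ℕ, 1 ≤ k ∧
        ∃ N : Subgroup (G ⧸ K), N.Normal ∧
          Nonempty (N ≃* (Fin k → H)) ∧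
          Subgroup.centralizer (N : Set (G ⧸ K)) = ⊥ :=
  minimal_nonsolvable_quotient_almost_characteristically_simple_general G K hK hmax
end
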